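/- Suppose in addition that τ_1 > 0, τ_2 > 0, d_1 < d_3 < −max(τ_1,τ_2) < 0 and d_4 < d_2 < −max(τ_1,τ_2) < 0. Then Q(h) = 1/( (2πi)^{4n_2} · n_1! · (Δn)! ) times the iterated integral in which z_1,…,z_{n_1} run over Γ_{d_1}, z_{n_1+1},…,z_{n_2} over Γ_{d_2}, w_1,…,w_{n_1} over Γ_{d_3}, w_{n_1+1},…,w_{n_2} over Γ_{d_4}, ζ_1,…,ζ_{n_2} over γ_{τ_1}, and ω_1,…,ω_{n_2} over γ_{τ_2}, of the integrand det( ζ_j^{−i} )_{1≤i,j≤n_2} · det( ω_j^{−(n_2+1−i)} )_{1≤i,j≤n_2} · ∏_{j=1}^{n_1} [ z_j^{n_1} w_j^{Δn} e^{(1/2)μ_1 z_j^2 − ξ_1 z_j + (1/2)Δμ w_j^2 − Δξ w_j} / ( e^{(1/2)μ_1 ζ_j^2 − ξ_1 ζ_j + (1/2)Δμ ω_j^2 − Δξ ω_j} (ζ_j − z_j)(ω_j − w_j) ) ] · ( 1/(z_j − w_j) − h ) · ∏_{j=n_1+1}^{n_2} [ z_j^{n_1+1} w_j^{Δn−1}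 e^{(1/2)μ_1 z_j^2 − ξ_1 z_j + (1/2)Δμ w_j^2 − Δξ w_j} / ( e^{(1/2)μ_1 ζ_j^2 − ξ_1 ζ_j + (1/2)Δμ ω_j^2 − Δξ ω_j} (w_j − z_j)(ζ_j − z_j)(ω_j − w_j) ) ]. -/

import Mathlib

open scoped BigOperators Real

open MeasureTheory

/-- The iterated contour integral `∮_{γ_{ρ_1}} ⋯ ∮_{γ_{ρ_n}} f(z_1,…,z_n) dz_n ⋯ dz_1`
over positively oriented circles `γ_{ρ_j}` of radius `ρ j` centred at the origin,
written as an integral over the angles `θ ∈ [0,2π]^n`. -/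
noncomputable def circlesIntegral {n : ℕ} (ρ : Fin n → ℝ) (f : (Fin n → ℂ) → ℂ) : ℂ :=
  ∫ θ in Set.univ.pi fun _ : Fin n => Set.Ioc (0 : ℝ) (2 * π),
    (∏ j : Fin n, Complex.I * (ρ j : ℂ) * Complex.exp (Complex.I * (θ j : ℂ))) *
      f fun j => (ρ j : ℂ) * Complex.exp (Complex.I * (θ j : ℂ))

/-- The iterated contour integral `∫_{Γ_{d_1}} ⋯ ∫_{Γ_{d_n}} f(z_1,…,z_n) dz_n ⋯ dz_1`
over upward-oriented vertical lines `Γ_{d_j} : t ↦ d_j + it`. -/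
noncomputable def linesIntegral {n : ℕ} (d : Fin n → ℝ) (f : (Fin n → ℂ) → ℂ) : ℂ :=
  ∫ t : Fin n → ℝ, Complex.I ^ n * f fun j => (d j : ℂ) + (t j : ℂ) * Complex.I

/-- The Gaussian factor `exp(μ₁z²/2 - ξ₁z + Δμw²/2 - Δξw)`. -/
noncomputable def Eexp (μ₁ ξ₁ Δμ Δξ : ℝ) (z w : ℂ) : ℂ :=
  Complex.exp ((μ₁ : ℂ) / 2 * z ^ 2 - (ξ₁ : ℂ) * z + (Δμ : ℂ) / 2 * w ^ 2 - (Δξ : ℂ) * w)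

/-!
For fixed `z`, `w` on the lines, the identity already holds for the integrands, so it suffices to
evaluate the `2n₂`-fold circle integral. Writing `Eexp(ζ, ω)⁻¹ = g₁(ζ) g₂(ω)` with entire `gᵢ`,
`gᵢ(0) = 1`, the integrand factorises, and by Fubini and multilinearity the circle integral of
`det(ζ_j^{-i-1}) ∏ g(ζ_j)/(ζ_j - x_j)` is the determinant of the one-variable integrals
`∮ ζ^{-i-1} g(ζ)/(ζ - x_j) dζ`. For `|x| > τ` the partial fraction
`ζ^{-k-1}/(ζ - x) = x^{-k-1}/(ζ - x) - ∑_{m ≤ k} ζ^{-(k-m)-1} x^{-m-1}`, Cauchy–Goursat and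
Cauchy's formula show that this matrix is a lower triangular matrix with diagonal `-2πi g(0)` times
`(x_j^{-i-1})`. Reversing the rows of `(x_j^{-i-1})` gives `∏ x_j^{-n}` times the Vandermonde matrix
`(x_j^{i})`, at the cost of the sign `(-1)^{n(n-1)/2}` of the reversal.
-/

open Complex Matrix Equiv

namespace circlesIntegral

variable {n : ℕ}

lemma const_mul (ρ : Fin n → ℝ) (c : ℂ) (f : (Fin n → ℂ) → ℂ) :
    circlesIntegral ρ (fun ζ => c * f ζ) = c * circlesIntegral ρ f := by
  rw [circlesIntegral, circlesIntegral, ← integral_const_mul]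
  congr 1 with θ
  ring

lemma mul_const (ρ : Fin n → ℝ) (c : ℂ) (f : (Fin n → ℂ) → ℂ) :
    circlesIntegral ρ (fun ζ => f ζ * c) = circlesIntegral ρ f * c := by
  simp only [mul_comm _ c, const_mul]

lemma eq_integral_pi (ρ : Fin n → ℝ) (f : (Fin n → ℂ) → ℂ) :
    circlesIntegral ρ f = ∫ θ, (∏ j, deriv (circleMap 0 (ρ j)) (θ j)) *
        f (fun j => circleMap 0 (ρ j) (θ j))
      ∂Measure.pi fun _ => volume.restrict (Set.Ioc 0 (2 * π)) := by
  rw [circlesIntegral, volume_pi, Measure.restrict_pi_pi]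
  congr 1 with θ
  simp only [deriv_circleMap, circleMap, zero_add]
  congr 1
  · refine Finset.prod_congr rfl fun j _ => ?_
    ring_nf
  · congr 1 with j
    ring_nf

lemma integral_pi_prod_eq (ρ : Fin n → ℝ) (f : Fin n → ℂ → ℂ) :
    ∫ θ, ∏ j, deriv (circleMap 0 (ρ j)) (θ j) * f j (circleMap 0 (ρ j) (θ j))
      ∂(Measure.pi fun _ => volume.restrict (Set.Ioc 0 (2 * π))) =
      ∏ j, ∮ z in C(0, ρ j), f j z := by
  rw [integral_fintype_prod_eq_prod
    (fun j θ => deriv (circleMap 0 (ρ j)) θ * f j (circleMap 0 (ρ j) θ))]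
  refine Finset.prod_congr rfl fun j _ => ?_
  rw [circleIntegral, intervalIntegral.integral_of_le Real.two_pi_pos.le]
  rfl

lemma det_eq (ρ : Fin n → ℝ) (f : Fin n → Fin n → ℂ → ℂ)
    (hf : ∀ i j, CircleIntegrable (f i j) 0 (ρ j)) :
    circlesIntegral ρ (fun ζ => (of fun i j => f i j (ζ j)).det) =
      (of fun i j => ∮ z in C(0, ρ j), f i j z).det := by
  have hint : ∀ σ : Perm (Fin n), Integrable
      (fun θ : Fin n → ℝ => ∏ j, deriv (circleMap 0 (ρ j)) (θ j) *
        f (σ j) j (circleMap 0 (ρ j) (θ j)))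
      (Measure.pi fun _ => volume.restrict (Set.Ioc 0 (2 * π))) := fun σ =>
    Integrable.fintype_prod (f := fun j θ => deriv (circleMap 0 (ρ j)) θ *
      f (σ j) j (circleMap 0 (ρ j) θ)) fun j =>
        (intervalIntegrable_iff_integrableOn_Ioc_of_le Real.two_pi_pos.le).1 (hf (σ j) j).out
  simp only [eq_integral_pi, det_apply', of_apply, Finset.mul_sum,
    mul_left_comm _ ((Perm.sign _ : ℤ) : ℂ), ← Finset.prod_mul_distrib]
  rw [integral_finsetSum _ fun σ _ => (hint σ).const_mul _]
  simp only [integral_const_mul, integral_pi_prod_eq]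

end circlesIntegral

lemma inv_pow_succ_eq_sub_mul_sum {K : Type*} [Field K] {z x : K} (hz : z ≠ 0) (hx : x ≠ 0)
    (k : ℕ) :
    z⁻¹ ^ (k + 1) =
      x⁻¹ ^ (k + 1) - (z - x) * ∑ m ∈ Finset.range (k + 1), z⁻¹ ^ (k - m + 1) * x⁻¹ ^ (m + 1) := by
  have hsum : ∑ m ∈ Finset.range (k + 1), z⁻¹ ^ (k - m + 1) * x⁻¹ ^ (m + 1) =
      z⁻¹ * x⁻¹ * ∑ m ∈ Finset.range (k + 1), x⁻¹ ^ m * z⁻¹ ^ (k + 1 - 1 - m) := by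
    rw [Finset.mul_sum]
    refine Finset.sum_congr rfl fun m _ => ?_
    rw [Nat.add_sub_cancel]
    ring
  have hgeom := geom_sum₂_mul x⁻¹ z⁻¹ (k + 1)
  have hzx : (z - x) * (z⁻¹ * x⁻¹) = x⁻¹ - z⁻¹ := by field_simp
  rw [hsum, ← mul_assoc, hzx, mul_comm, hgeom]
  ring

lemma sub_ne_zero_of_mem_closedBall {R : ℝ} {x z : ℂ} (hx : R < ‖x‖)
    (hz : z ∈ Metric.closedBall (0 : ℂ) R) : z - x ≠ 0 := by
  rw [mem_closedBall_zero_iff] at hz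
  exact sub_ne_zero.2 fun h => (h ▸ hz).not_gt hx

lemma circleIntegral_inv_pow_succ_mul_sub_inv {g : ℂ → ℂ} (hg : Differentiable ℂ g) {R : ℝ}
    (hR : 0 < R) {x : ℂ} (hx : R < ‖x‖) (k : ℕ) :
    (∮ z in C(0, R), z⁻¹ ^ (k + 1) * (g z * (z - x)⁻¹)) =
      -∑ m ∈ Finset.range (k + 1), (∮ z in C(0, R), z⁻¹ ^ (k - m + 1) * g z) * x⁻¹ ^ (m + 1) := by
  have hx0 : x ≠ 0 := norm_pos_iff.1 (hR.trans hx)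
  have hkernel : ContinuousOn (fun z => g z * (z - x)⁻¹) (Metric.closedBall 0 R) :=
    hg.continuous.continuousOn.mul ((continuousOn_id.sub continuousOn_const).inv₀
      fun z hz => sub_ne_zero_of_mem_closedBall hx hz)
  have hmoment : ∀ m : ℕ, CircleIntegrable (fun z => z⁻¹ ^ m * g z) 0 R := fun m =>
    ((continuousOn_id.inv₀ fun z hz => ne_zero_of_mem_sphere hR.ne' ⟨z, hz⟩).pow m).mul
      hg.continuous.continuousOn |>.circleIntegrable hR.le
  have hgoursat : (∮ z in C(0, R), g z * (z - x)⁻¹) = 0 :=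
    Complex.circleIntegral_eq_zero_of_differentiable_on_off_countable hR.le Set.countable_empty
      hkernel fun z hz => (hg z).mul ((differentiableAt_id.sub_const x).inv
        (sub_ne_zero_of_mem_closedBall hx (Metric.ball_subset_closedBall hz.1)))
  calc (∮ z in C(0, R), z⁻¹ ^ (k + 1) * (g z * (z - x)⁻¹))
      = ∮ z in C(0, R), x⁻¹ ^ (k + 1) * (g z * (z - x)⁻¹) -
          ∑ m ∈ Finset.range (k + 1), x⁻¹ ^ (m + 1) * (z⁻¹ ^ (k - m + 1) * g z) := by
        refine circleIntegral.integral_congr hR.le fun z hz => ?_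
        have hzx : z - x ≠ 0 :=
          sub_ne_zero_of_mem_closedBall hx (Metric.sphere_subset_closedBall hz)
        rw [inv_pow_succ_eq_sub_mul_sum (ne_zero_of_mem_sphere hR.ne' ⟨z, hz⟩) hx0 k, sub_mul,
          Finset.mul_sum, Finset.sum_mul]
        congr 1
        refine Finset.sum_congr rfl fun m _ => ?_
        field_simp
    _ = _ := by
        rw [circleIntegral.integral_sub, circleIntegral.integral_const_mul, hgoursat,
          circleIntegral.integral_fun_sum]
        · simp only [circleIntegral.integral_const_mul, mul_zero, zero_sub, neg_inj]
          exact Finset.sum_congr rfl fun m _ => mul_comm _ _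
        · exact fun m _ => (hmoment _).const_mul _
        · exact ((hkernel.mono Metric.sphere_subset_closedBall).circleIntegrable hR.le).const_mul _
        · exact .fun_sum _ fun m _ => (hmoment _).const_mul _

lemma circleIntegral_inv_mul {g : ℂ → ℂ} (hg : Differentiable ℂ g) {R : ℝ} (hR : 0 < R) :
    (∮ z in C(0, R), z⁻¹ * g z) = 2 * π * I * g 0 := by
  simpa only [sub_zero, smul_eq_mul] using
    hg.diffContOnCl.circleIntegral_sub_inv_smul (Metric.mem_ball_self (x := (0 : ℂ)) hR)

lemma Fin.sum_range_succ_eq_sum_ite {M : Type*} [AddCommMonoid M] {n : ℕ} (f : ℕ → M)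
    (i : Fin n) :
    ∑ m ∈ Finset.range (i + 1), f m = ∑ m : Fin n, if (m : ℕ) ≤ i then f m else 0 := by
  rw [Fin.sum_univ_eq_sum_range (fun m => if m ≤ (i : ℕ) then f m else 0), ← Finset.sum_filter]
  congr 1 with m
  simp only [Finset.mem_range, Finset.mem_filter]
  omega

section

variable {n : ℕ}

lemma det_circleIntegral_inv_pow_succ_mul_sub_inv {g : ℂ → ℂ} (hg : Differentiable ℂ g) {R : ℝ}
    (hR : 0 < R) {x : Fin n → ℂ} (hx : ∀ j, R < ‖x j‖) (σ : Perm (Fin n)) :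
    (of fun i j => ∮ z in C(0, R), z⁻¹ ^ ((σ i : ℕ) + 1) * (g z * (z - x j)⁻¹)).det =
      (-(2 * π * I * g 0)) ^ n * (of fun i j => (x j)⁻¹ ^ ((σ i : ℕ) + 1)).det := by
  set c : ℕ → ℂ := fun m => ∮ z in C(0, R), z⁻¹ ^ (m + 1) * g z
  set L : Matrix (Fin n) (Fin n) ℂ := of fun i m => if (m : ℕ) ≤ i then -c (i - m) else 0
  set W : Matrix (Fin n) (Fin n) ℂ := of fun m j => (x j)⁻¹ ^ ((m : ℕ) + 1)
  have hfactor :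
      (of fun i j : Fin n => ∮ z in C(0, R), z⁻¹ ^ ((i : ℕ) + 1) * (g z * (z - x j)⁻¹)) =
        L * W := by
    ext i j
    rw [of_apply, circleIntegral_inv_pow_succ_mul_sub_inv hg hR (hx j), mul_apply,
      ← Finset.sum_neg_distrib, Fin.sum_range_succ_eq_sum_ite]
    refine Finset.sum_congr rfl fun m _ => ?_
    simp only [L, W, c, of_apply, ite_mul, zero_mul, neg_mul]
  have hL : L.det = (-(2 * π * I * g 0)) ^ n := by
    rw [det_of_isLowerTriangular L fun i m (h : i < m) => if_neg (not_le.2 h)]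
    simp only [L, of_apply, le_refl, if_true, Nat.sub_self, c, zero_add, pow_one,
      circleIntegral_inv_mul hg hR, Finset.prod_const, Finset.card_univ, Fintype.card_fin]
  calc _ = ((L * W).submatrix σ id).det := by rw [← hfactor]; rfl
    _ = (-(2 * π * I * g 0)) ^ n * (W.submatrix σ id).det := by
      rw [det_permute, det_permute, det_mul, hL]; ring

lemma Fin.revPerm_succ (n : ℕ) :
    (Fin.revPerm : Perm (Fin (n + 1))) =
      finRotate (n + 1) *
        finSuccEquivLast.symm.permCongr (Fin.revPerm : Perm (Fin n)).optionCongr := by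
  ext x
  refine Fin.lastCases ?_ (fun i => ?_) x
  · simp [Equiv.permCongr_apply, finSuccEquivLast_last]
  · simp [Equiv.permCongr_apply, finSuccEquivLast_castSucc, Fin.rev_castSucc,
      Fin.coeSucc_eq_succ]

lemma Fin.sign_revPerm (n : ℕ) :
    Perm.sign (Fin.revPerm : Perm (Fin n)) = (-1) ^ n.choose 2 := by
  induction n with
  | zero => rfl
  | succ n ih =>
    rw [Fin.revPerm_succ, map_mul, sign_finRotate, Perm.sign_permCongr, optionCongr_sign, ih,
      ← pow_add, Nat.choose_succ_succ', Nat.choose_one_right]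
    rfl

lemma det_inv_pow_succ {K : Type*} [Field K] {n : ℕ} {x : Fin n → K} (hx : ∀ j, x j ≠ 0)
    (σ : Perm (Fin n)) :
    (of fun i j => (x j)⁻¹ ^ ((σ i : ℕ) + 1)).det =
      Perm.sign (σ.trans Fin.revPerm) * (∏ j, (x j ^ n)⁻¹) *
        (of fun i j : Fin n => x j ^ (i : ℕ)).det := by
  have hentry : (of fun i j => (x j)⁻¹ ^ ((σ i : ℕ) + 1)) = of fun i j => (x j ^ n)⁻¹ *
      (of fun i j : Fin n => x j ^ (i : ℕ)).submatrix (σ.trans Fin.revPerm) id i j := by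
    ext i j
    have hsplit : x j ^ n = x j ^ (n - ((σ i : ℕ) + 1)) * x j ^ ((σ i : ℕ) + 1) := by
      rw [← pow_add, Nat.sub_add_cancel (σ i).isLt]
    simp only [of_apply, submatrix_apply, Equiv.trans_apply, Fin.revPerm_apply, Fin.val_rev, id,
      hsplit, inv_pow]
    field_simp [pow_ne_zero _ (hx j)]
  rw [hentry, det_mul_row, det_permute]
  ring

lemma circlesIntegral_det_inv_pow_succ_mul_prod_sub_inv {g : ℂ → ℂ} (hg : Differentiable ℂ g)
    {R : ℝ} (hR : 0 < R) {x : Fin n → ℂ} (hx : ∀ j, R < ‖x j‖) (σ : Perm (Fin n)) :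
    circlesIntegral (fun _ => R) (fun ζ =>
        (of fun i j => (ζ j)⁻¹ ^ ((σ i : ℕ) + 1)).det * ∏ j, g (ζ j) * (ζ j - x j)⁻¹) =
      (-(2 * π * I * g 0)) ^ n * Perm.sign (σ.trans Fin.revPerm) * (∏ j, (x j ^ n)⁻¹) *
        (of fun i j : Fin n => x j ^ (i : ℕ)).det := by
  have hcols : ∀ ζ : Fin n → ℂ, (of fun i j => (ζ j)⁻¹ ^ ((σ i : ℕ) + 1)).det *
      ∏ j, g (ζ j) * (ζ j - x j)⁻¹ =
      (of fun i j => (ζ j)⁻¹ ^ ((σ i : ℕ) + 1) * (g (ζ j) * (ζ j - x j)⁻¹)).det := fun ζ => by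
    rw [mul_comm, ← det_mul_row]
    simp only [of_apply, mul_comm]
  have hint : ∀ i j, CircleIntegrable
      (fun z => z⁻¹ ^ ((σ i : ℕ) + 1) * (g z * (z - x j)⁻¹)) 0 R := fun i j =>
    ContinuousOn.circleIntegrable hR.le <|
      ((continuousOn_id.inv₀ fun z hz => ne_zero_of_mem_sphere hR.ne' ⟨z, hz⟩).pow _).mul
        (hg.continuous.continuousOn.mul ((continuousOn_id.sub continuousOn_const).inv₀
          fun z hz => sub_ne_zero_of_mem_closedBall (hx j) (Metric.sphere_subset_closedBall hz)))
  simp only [hcols]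
  rw [circlesIntegral.det_eq _ _ hint, det_circleIntegral_inv_pow_succ_mul_sub_inv hg hR hx,
    det_inv_pow_succ (fun j => norm_pos_iff.1 (hR.trans (hx j)))]
  ring

lemma zpow_neg_natCast_add_one {K : Type*} [DivisionRing K] (z : K) (k : ℕ) :
    z ^ (-((k : ℤ) + 1)) = z⁻¹ ^ (k + 1) := by
  rw [← Nat.cast_succ, _root_.zpow_neg, zpow_natCast, inv_pow]

lemma Fin.neg_natCast_sub_val (i : Fin n) :
    -((n : ℤ) - (i : ℕ)) = -(((Fin.rev i : ℕ) : ℤ) + 1) := by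
  rw [Fin.val_rev]
  omega

lemma circlesIntegral_circlesIntegral_det_zpow {g₁ g₂ : ℂ → ℂ} (hg₁ : Differentiable ℂ g₁)
    (hg₂ : Differentiable ℂ g₂) {R₁ R₂ : ℝ} (hR₁ : 0 < R₁) (hR₂ : 0 < R₂) {z w : Fin n → ℂ}
    (hz : ∀ j, R₁ < ‖z j‖) (hw : ∀ j, R₂ < ‖w j‖) (b : Fin n → ℂ) :
    circlesIntegral (fun _ => R₁) (fun ζ => circlesIntegral (fun _ => R₂) (fun ω =>
        (of fun i j : Fin n => ζ j ^ (-(((i : ℕ) : ℤ) + 1))).det *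
          (of fun i j : Fin n => ω j ^ (-((n : ℤ) - ((i : ℕ) : ℤ)))).det *
          ∏ j, b j * (g₁ (ζ j) * (ζ j - z j)⁻¹) * (g₂ (ω j) * (ω j - w j)⁻¹))) =
      (2 * π * I) ^ (2 * n) * (g₁ 0 * g₂ 0) ^ n * (-1) ^ n.choose 2 *
        (∏ j, b j / (z j ^ n * w j ^ n)) * (of fun i j : Fin n => z j ^ (i : ℕ)).det *
        (of fun i j : Fin n => w j ^ (i : ℕ)).det := by
  set G₁ := fun ζ : Fin n → ℂ =>
    (of fun i j => (ζ j)⁻¹ ^ (((Equiv.refl (Fin n)) i : ℕ) + 1)).det * ∏ j, g₁ (ζ j) * (ζ j - z j)⁻¹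
  set G₂ := fun ω : Fin n → ℂ =>
    (of fun i j => (ω j)⁻¹ ^ ((Fin.revPerm i : ℕ) + 1)).det * ∏ j, g₂ (ω j) * (ω j - w j)⁻¹
  have hsplit : ∀ ζ ω : Fin n → ℂ,
      (of fun i j : Fin n => ζ j ^ (-(((i : ℕ) : ℤ) + 1))).det *
          (of fun i j : Fin n => ω j ^ (-((n : ℤ) - ((i : ℕ) : ℤ)))).det *
          ∏ j, b j * (g₁ (ζ j) * (ζ j - z j)⁻¹) * (g₂ (ω j) * (ω j - w j)⁻¹) =
        G₁ ζ * ((∏ j, b j) * G₂ ω) := fun ζ ω => by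
    simp only [G₁, G₂, Finset.prod_mul_distrib, zpow_neg_natCast_add_one, Fin.neg_natCast_sub_val,
      Equiv.refl_apply, Fin.revPerm_apply]
    ring
  have hG₁ : circlesIntegral (fun _ => R₁) G₁ = (-(2 * π * I * g₁ 0)) ^ n *
      (-1) ^ n.choose 2 * (∏ j, (z j ^ n)⁻¹) * (of fun i j : Fin n => z j ^ (i : ℕ)).det := by
    rw [circlesIntegral_det_inv_pow_succ_mul_prod_sub_inv hg₁ hR₁ hz, Equiv.refl_trans,
      Fin.sign_revPerm]
    push_cast
    rfl
  have hG₂ : circlesIntegral (fun _ => R₂) G₂ = (-(2 * π * I * g₂ 0)) ^ n *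
      (∏ j, (w j ^ n)⁻¹) * (of fun i j : Fin n => w j ^ (i : ℕ)).det := by
    rw [circlesIntegral_det_inv_pow_succ_mul_prod_sub_inv hg₂ hR₂ hw,
      show Fin.revPerm.trans Fin.revPerm = Equiv.refl (Fin n) from Equiv.ext Fin.rev_rev]
    simp
  simp only [hsplit, circlesIntegral.const_mul, circlesIntegral.mul_const, hG₁, hG₂]
  have hconst : (-(2 * π * I * g₁ 0)) ^ n * (-(2 * π * I * g₂ 0)) ^ n =
      (2 * π * I) ^ (2 * n) * (g₁ 0 * g₂ 0) ^ n := by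
    rw [← mul_pow, neg_mul_neg, pow_mul]
    ring
  rw [← hconst]
  simp only [div_eq_mul_inv, mul_inv, Finset.prod_mul_distrib]
  ring

end

noncomputable def gaussWeight (μ ξ : ℝ) (t : ℂ) : ℂ :=
  Complex.exp (-((μ : ℂ) / 2 * t ^ 2 - (ξ : ℂ) * t))

lemma differentiable_gaussWeight (μ ξ : ℝ) : Differentiable ℂ (gaussWeight μ ξ) := by
  unfold gaussWeight
  fun_prop

@[simp]
lemma gaussWeight_zero (μ ξ : ℝ) : gaussWeight μ ξ 0 = 1 := by
  simp [gaussWeight]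

lemma Eexp_eq_inv (μ₁ ξ₁ Δμ Δξ : ℝ) (z w : ℂ) :
    Eexp μ₁ ξ₁ Δμ Δξ z w = (gaussWeight μ₁ ξ₁ z * gaussWeight Δμ Δξ w)⁻¹ := by
  rw [Eexp, gaussWeight, gaussWeight, ← Complex.exp_add, ← Complex.exp_neg]
  ring_nf

section weights

variable (n₁ n₂ : ℕ) (μ₁ ξ₁ Δμ Δξ : ℝ) (h : ℂ)

/- The `j`-th factors of the products in the two integrands of `Q_contour_representation`; they
unfold definitionally to the expressions written there. -/
noncomputable def lineWeight (j : ℕ) (z w : ℂ) : ℂ :=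
  if j < n₁ then Eexp μ₁ ξ₁ Δμ Δξ z w / (z ^ (n₂ - n₁) * w ^ n₁) * ((z - w)⁻¹ - h)
  else Eexp μ₁ ξ₁ Δμ Δξ z w / (z ^ (n₂ - n₁ - 1) * w ^ (n₁ + 1) * (w - z))

noncomputable def circleWeight (j : ℕ) (z w ζ ω : ℂ) : ℂ :=
  if j < n₁ then
    z ^ n₁ * w ^ (n₂ - n₁) * Eexp μ₁ ξ₁ Δμ Δξ z w /
      (Eexp μ₁ ξ₁ Δμ Δξ ζ ω * (ζ - z) * (ω - w)) * ((z - w)⁻¹ - h)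
  else
    z ^ (n₁ + 1) * w ^ (n₂ - n₁ - 1) * Eexp μ₁ ξ₁ Δμ Δξ z w /
      (Eexp μ₁ ξ₁ Δμ Δξ ζ ω * (w - z) * (ζ - z) * (ω - w))

variable {n₁ n₂}

lemma circleWeight_eq (hn : n₁ ≤ n₂) {j : ℕ} (hj : j < n₂) {z w : ℂ} (hz : z ≠ 0) (hw : w ≠ 0)
    (ζ ω : ℂ) :
    circleWeight n₁ n₂ μ₁ ξ₁ Δμ Δξ h j z w ζ ω =
      z ^ n₂ * w ^ n₂ * lineWeight n₁ n₂ μ₁ ξ₁ Δμ Δξ h j z w *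
        (gaussWeight μ₁ ξ₁ ζ * (ζ - z)⁻¹) * (gaussWeight Δμ Δξ ω * (ω - w)⁻¹) := by
  unfold circleWeight lineWeight
  split_ifs with hjn
  · have hzpow : z ^ n₂ = z ^ (n₂ - n₁) * z ^ n₁ := by rw [← pow_add, Nat.sub_add_cancel hn]
    have hwpow : w ^ n₂ = w ^ n₁ * w ^ (n₂ - n₁) := by rw [← pow_add, Nat.add_sub_cancel' hn]
    rw [hzpow, hwpow, Eexp_eq_inv μ₁ ξ₁ Δμ Δξ ζ ω]
    field_simp
  · have hn' : n₁ + 1 ≤ n₂ := by omega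
    have hzpow : z ^ n₂ = z ^ (n₂ - n₁ - 1) * z ^ (n₁ + 1) := by
      rw [← pow_add, Nat.sub_sub, Nat.sub_add_cancel hn']
    have hwpow : w ^ n₂ = w ^ (n₁ + 1) * w ^ (n₂ - n₁ - 1) := by
      rw [← pow_add, Nat.sub_sub, Nat.add_sub_cancel' hn']
    rw [hzpow, hwpow, Eexp_eq_inv μ₁ ξ₁ Δμ Δξ ζ ω]
    field_simp

lemma circlesIntegral_circleWeight (hn : n₁ ≤ n₂) {τ₁ τ₂ : ℝ} (hτ₁ : 0 < τ₁) (hτ₂ : 0 < τ₂)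
    {z w : Fin n₂ → ℂ} (hz : ∀ j, τ₁ < ‖z j‖) (hw : ∀ j, τ₂ < ‖w j‖) :
    circlesIntegral (fun _ => τ₁) (fun ζ => circlesIntegral (fun _ => τ₂) (fun ω =>
        (of fun i j : Fin n₂ => ζ j ^ (-(((i : ℕ) : ℤ) + 1))).det *
          (of fun i j : Fin n₂ => ω j ^ (-((n₂ : ℤ) - ((i : ℕ) : ℤ)))).det *
          ∏ j : Fin n₂, circleWeight n₁ n₂ μ₁ ξ₁ Δμ Δξ h j (z j) (w j) (ζ j) (ω j))) =
      (2 * π * I) ^ (2 * n₂) * (-1) ^ n₂.choose 2 * (of fun i j : Fin n₂ => z j ^ (i : ℕ)).det *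
        (of fun i j : Fin n₂ => w j ^ (i : ℕ)).det *
        ∏ j : Fin n₂, lineWeight n₁ n₂ μ₁ ξ₁ Δμ Δξ h j (z j) (w j) := by
  have hz0 : ∀ j, z j ≠ 0 := fun j => norm_pos_iff.1 (hτ₁.trans (hz j))
  have hw0 : ∀ j, w j ≠ 0 := fun j => norm_pos_iff.1 (hτ₂.trans (hw j))
  simp only [circleWeight_eq μ₁ ξ₁ Δμ Δξ h hn (Fin.is_lt _) (hz0 _) (hw0 _)]
  rw [circlesIntegral_circlesIntegral_det_zpow (differentiable_gaussWeight μ₁ ξ₁)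
    (differentiable_gaussWeight Δμ Δξ) hτ₁ hτ₂ hz hw]
  simp only [gaussWeight_zero, mul_one, one_pow]
  rw [Finset.prod_congr rfl fun j _ => mul_div_cancel_left₀ _
    (mul_ne_zero (pow_ne_zero n₂ (hz0 j)) (pow_ne_zero n₂ (hw0 j)))]
  ring

end weights

lemma linesIntegral_mul_congr {n : ℕ} {d : Fin n → ℝ} {c₁ c₂ : ℂ} {f g : (Fin n → ℂ) → ℂ}
    (hfg : ∀ t : Fin n → ℝ, c₁ * f (fun j => d j + t j * I) = c₂ * g (fun j => d j + t j * I)) :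
    c₁ * linesIntegral d f = c₂ * linesIntegral d g := by
  simp only [linesIntegral, ← integral_const_mul, mul_left_comm c₁, mul_left_comm c₂, hfg]

lemma lt_norm_of_lt_neg {τ d : ℝ} (h : d < -τ) (t : ℝ) : τ < ‖(d : ℂ) + t * I‖ := by
  calc τ < -d := by linarith
    _ ≤ |d| := neg_le_abs d
    _ ≤ ‖(d : ℂ) + t * I‖ := by simpa using Complex.abs_re_le_norm ((d : ℂ) + t * I)

theorem Q_contour_representation_general (n₁ n₂ : ℕ) (hn₁₂ : n₁ < n₂)
    (μ₁ Δμ ξ₁ Δξ : ℝ) (h : ℂ)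
    (d₁ d₂ d₃ d₄ τ₁ τ₂ : ℝ) (hτ₁ : 0 < τ₁) (hτ₂ : 0 < τ₂)
    (h₁₃ : d₁ < d₃) (h₃τ : d₃ < -max τ₁ τ₂) (h₄₂ : d₄ < d₂) (h₂τ : d₂ < -max τ₁ τ₂) :
    (-1 : ℂ) ^ (n₂ * (n₂ - 1) / 2) /
        ((2 * (π : ℂ) * Complex.I) ^ (2 * n₂) *
          (Nat.factorial n₁ : ℂ) * (Nat.factorial (n₂ - n₁) : ℂ)) *
      linesIntegral (fun j : Fin n₂ => if (j : ℕ) < n₁ then d₁ else d₂) (fun z =>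
        linesIntegral (fun j : Fin n₂ => if (j : ℕ) < n₁ then d₃ else d₄) (fun wv =>
          Matrix.det (Matrix.of fun i j : Fin n₂ => z j ^ (i : ℕ)) *
            Matrix.det (Matrix.of fun i j : Fin n₂ => wv j ^ (i : ℕ)) *
            ∏ j : Fin n₂,
              if (j : ℕ) < n₁ then
                Eexp μ₁ ξ₁ Δμ Δξ (z j) (wv j) /
                    (z j ^ (n₂ - n₁) * wv j ^ n₁) * ((z j - wv j)⁻¹ - h)
              else
                Eexp μ₁ ξ₁ Δμ Δξ (z j) (wv j) /
                  (z j ^ (n₂ - n₁ - 1) * wv j ^ (n₁ + 1) * (wv j - z j)))) =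
      1 / ((2 * (π : ℂ) * Complex.I) ^ (4 * n₂) *
          (Nat.factorial n₁ : ℂ) * (Nat.factorial (n₂ - n₁) : ℂ)) *
        linesIntegral (fun j : Fin n₂ => if (j : ℕ) < n₁ then d₁ else d₂) (fun z =>
          linesIntegral (fun j : Fin n₂ => if (j : ℕ) < n₁ then d₃ else d₄) (fun wv =>
            circlesIntegral (fun _ : Fin n₂ => τ₁) (fun ζ =>
              circlesIntegral (fun _ : Fin n₂ => τ₂) (fun ω =>
                Matrix.det (Matrix.of fun i j : Fin n₂ =>
                    ζ j ^ (-(((i : ℕ) : ℤ) + 1))) *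
                  Matrix.det (Matrix.of fun i j : Fin n₂ =>
                    ω j ^ (-((n₂ : ℤ) - ((i : ℕ) : ℤ)))) *
                  ∏ j : Fin n₂,
                    if (j : ℕ) < n₁ then
                      z j ^ n₁ * wv j ^ (n₂ - n₁) * Eexp μ₁ ξ₁ Δμ Δξ (z j) (wv j) /
                          (Eexp μ₁ ξ₁ Δμ Δξ (ζ j) (ω j) * (ζ j - z j) * (ω j - wv j)) *
                        ((z j - wv j)⁻¹ - h)
                    else
                      z j ^ (n₁ + 1) * wv j ^ (n₂ - n₁ - 1) *
                          Eexp μ₁ ξ₁ Δμ Δξ (z j) (wv j) /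
                        (Eexp μ₁ ξ₁ Δμ Δξ (ζ j) (ω j) * (wv j - z j) *
                          (ζ j - z j) * (ω j - wv j)))))) := by
  have hz : ∀ (t : Fin n₂ → ℝ) (j : Fin n₂),
      τ₁ < ‖((if (j : ℕ) < n₁ then d₁ else d₂ : ℝ) : ℂ) + t j * I‖ := fun t j =>
    lt_norm_of_lt_neg (by split_ifs <;> linarith [le_max_left τ₁ τ₂]) _
  have hw : ∀ (s : Fin n₂ → ℝ) (j : Fin n₂),
      τ₂ < ‖((if (j : ℕ) < n₁ then d₃ else d₄ : ℝ) : ℂ) + s j * I‖ := fun s j =>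
    lt_norm_of_lt_neg (by split_ifs <;> linarith [le_max_right τ₁ τ₂]) _
  refine linesIntegral_mul_congr fun t => linesIntegral_mul_congr fun s => ?_
  refine Eq.trans ?_ (congrArg (_ * ·)
    (circlesIntegral_circleWeight μ₁ ξ₁ Δμ Δξ h hn₁₂.le hτ₁ hτ₂ (hz t) (hw s))).symm
  rw [← Nat.choose_two_right]
  unfold lineWeight
  field_simp
  ring

/-- Lemma 3.1: the formula (3.1) for `Q(h)`.  Here `Q(h)` is defined by the `2n₂`-fold
line integral (2.27) (the left-hand side below), and the right-hand side is the
`4n₂`-fold integral in which the Vandermonde determinants have been replaced by contour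
integrals over the circles `γ_{τ₁}`, `γ_{τ₂}`, valid when
`d₁ < d₃ < -max(τ₁,τ₂) < 0` and `d₄ < d₂ < -max(τ₁,τ₂) < 0`. -/
theorem Q_contour_representation (n₁ n₂ : ℕ) (hn₁ : 1 ≤ n₁) (hn₁₂ : n₁ < n₂)
    (μ₁ Δμ ξ₁ Δξ : ℝ) (hμ₁ : 0 < μ₁) (hΔμ : 0 < Δμ) (h : ℂ)
    (d₁ d₂ d₃ d₄ τ₁ τ₂ : ℝ) (hτ₁ : 0 < τ₁) (hτ₂ : 0 < τ₂)
    (h₁₃ : d₁ < d₃) (h₃τ : d₃ < -max τ₁ τ₂) (h₄₂ : d₄ < d₂) (h₂τ : d₂ < -max τ₁ τ₂) :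
    (-1 : ℂ) ^ (n₂ * (n₂ - 1) / 2) /
        ((2 * (π : ℂ) * Complex.I) ^ (2 * n₂) *
          (Nat.factorial n₁ : ℂ) * (Nat.factorial (n₂ - n₁) : ℂ)) *
      linesIntegral (fun j : Fin n₂ => if (j : ℕ) < n₁ then d₁ else d₂) (fun z =>
        linesIntegral (fun j : Fin n₂ => if (j : ℕ) < n₁ then d₃ else d₄) (fun wv =>
          Matrix.det (Matrix.of fun i j : Fin n₂ => z j ^ (i : ℕ)) *
            Matrix.det (Matrix.of fun i j : Fin n₂ => wv j ^ (i : ℕ)) *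
            ∏ j : Fin n₂,
              if (j : ℕ) < n₁ then
                Eexp μ₁ ξ₁ Δμ Δξ (z j) (wv j) /
                    (z j ^ (n₂ - n₁) * wv j ^ n₁) * ((z j - wv j)⁻¹ - h)
              else
                Eexp μ₁ ξ₁ Δμ Δξ (z j) (wv j) /
                  (z j ^ (n₂ - n₁ - 1) * wv j ^ (n₁ + 1) * (wv j - z j)))) =
      1 / ((2 * (π : ℂ) * Complex.I) ^ (4 * n₂) *
          (Nat.factorial n₁ : ℂ) * (Nat.factorial (n₂ - n₁) : ℂ)) *
        linesIntegral (fun j : Fin n₂ => if (j : ℕ) < n₁ then d₁ else d₂) (fun z =>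
          linesIntegral (fun j : Fin n₂ => if (j : ℕ) < n₁ then d₃ else d₄) (fun wv =>
            circlesIntegral (fun _ : Fin n₂ => τ₁) (fun ζ =>
              circlesIntegral (fun _ : Fin n₂ => τ₂) (fun ω =>
                Matrix.det (Matrix.of fun i j : Fin n₂ =>
                    ζ j ^ (-(((i : ℕ) : ℤ) + 1))) *
                  Matrix.det (Matrix.of fun i j : Fin n₂ =>
                    ω j ^ (-((n₂ : ℤ) - ((i : ℕ) : ℤ)))) *
                  ∏ j : Fin n₂,
                    if (j : ℕ) < n₁ then
                      z j ^ n₁ * wv j ^ (n₂ - n₁) * Eexp μ₁ ξ₁ Δμ Δξ (z j) (wv j) /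
                          (Eexp μ₁ ξ₁ Δμ Δξ (ζ j) (ω j) * (ζ j - z j) * (ω j - wv j)) *
                        ((z j - wv j)⁻¹ - h)
                    else
                      z j ^ (n₁ + 1) * wv j ^ (n₂ - n₁ - 1) *
                          Eexp μ₁ ξ₁ Δμ Δξ (z j) (wv j) /
                        (Eexp μ₁ ξ₁ Δμ Δξ (ζ j) (ω j) * (wv j - z j) *
                          (ζ j - z j) * (ω j - wv j)))))) :=
  Q_contour_representation_general n₁ n₂ hn₁₂ μ₁ Δμ ξ₁ Δξ h d₁ d₂ d₃ d₄ τ₁ τ₂ hτ₁ hτ₂ h₁₃ h₃τ h₄₂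
    h₂τ
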